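/- arXiv:0811.1952 — 3 statements merged into one kernel-verified Lean document; each statement's English description precedes it below -/
import Mathlib

section
/- For every k ≥ 1, the group homomorphism from the free group F_k to the genus-k surface group Π_k determined by sending the i-th free generator to the generator a_i is injective; in particular its image is a free subgroup of Π_k of rank k. -/
open scoped commutatorElement

/-- The single relator of the genus-`g` surface group:
`[a₁,b₁]·[a₂,b₂]⋯[a_g,b_g]` in the free group on `2g` generators,
where `aᵢ` is generator `2i` and `bᵢ` is generator `2i+1`. -/
def surfaceRelator (g : ℕ) : FreeGroup (Fin (2 * g)) :=
  (List.ofFn (fun i : Fin g =>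
    ⁅FreeGroup.of (⟨2 * i.1, by omega⟩ : Fin (2 * g)),
      FreeGroup.of (⟨2 * i.1 + 1, by omega⟩ : Fin (2 * g))⁆)).prod

/-- The genus-`g` surface group `Π_g`. -/
abbrev SurfaceGroup (g : ℕ) : Type :=
  PresentedGroup ({surfaceRelator g} : Set (FreeGroup (Fin (2 * g))))

/-- The generator `aᵢ` of the genus-`g` surface group. -/
def surfaceA (g : ℕ) (i : Fin g) : SurfaceGroup g :=
  PresentedGroup.of (⟨2 * i.1, by omega⟩ : Fin (2 * g))

/-- The generator `bᵢ` of the genus-`g` surface group. -/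
def surfaceB (g : ℕ) (i : Fin g) : SurfaceGroup g :=
  PresentedGroup.of (⟨2 * i.1 + 1, by omega⟩ : Fin (2 * g))

/-! Killing every `bᵢ` turns each factor `[aᵢ, bᵢ]` of the relator into `1`, so `aᵢ ↦ xᵢ`,
`bᵢ ↦ 1` defines a retraction `Π_g → F_g` of `xᵢ ↦ aᵢ`, which is therefore injective. -/

namespace SurfaceGroup

variable (g : ℕ)

def retractionOnGenerators (j : Fin (2 * g)) : FreeGroup (Fin g) :=
  if j.1 % 2 = 0 then FreeGroup.of ⟨j.1 / 2, by omega⟩ else 1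

theorem lift_retractionOnGenerators_surfaceRelator :
    FreeGroup.lift (retractionOnGenerators g) (surfaceRelator g) = 1 := by
  rw [surfaceRelator, map_list_prod, List.map_ofFn]
  refine List.prod_eq_one fun x hx => ?_
  obtain ⟨i, rfl⟩ := List.mem_ofFn.mp hx
  have hb : retractionOnGenerators g ⟨2 * i.1 + 1, by omega⟩ = 1 :=
    if_neg (by simp [Nat.add_mod])
  simp only [Function.comp_apply, map_commutatorElement, FreeGroup.lift_apply_of, hb,
    commutatorElement_one_right]

def retraction : SurfaceGroup g →* FreeGroup (Fin g) :=
  PresentedGroup.toGroup fun _ hr =>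
    (Set.mem_singleton_iff.mp hr) ▸ lift_retractionOnGenerators_surfaceRelator g

@[simp]
theorem retraction_surfaceA (i : Fin g) : retraction g (surfaceA g i) = FreeGroup.of i := by
  rw [surfaceA, retraction, PresentedGroup.toGroup.of, retractionOnGenerators,
    if_pos (by simp)]
  simp

theorem retraction_comp_lift_surfaceA :
    (retraction g).comp (FreeGroup.lift (surfaceA g)) = MonoidHom.id _ :=
  FreeGroup.ext_hom _ _ fun i => by simp

end SurfaceGroup

theorem freeGroup_to_surfaceGroup_injective_general (k : ℕ) :
    Function.Injective (FreeGroup.lift (fun i : Fin k => surfaceA k i)) ∧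
    Nonempty
      ((FreeGroup.lift (fun i : Fin k => surfaceA k i)).range ≃* FreeGroup (Fin k)) := by
  have hinj : Function.Injective (FreeGroup.lift (fun i : Fin k => surfaceA k i)) :=
    Function.LeftInverse.injective (g := SurfaceGroup.retraction k) fun x =>
      DFunLike.congr_fun (SurfaceGroup.retraction_comp_lift_surfaceA k) x
  exact ⟨hinj, ⟨(MonoidHom.ofInjective hinj).symm⟩⟩

/-- For `k ≥ 1`, the homomorphism `F_k → Π_k` sending the `i`-th free generator
to `aᵢ` is injective; in particular its image is a free subgroup of rank `k`. -/
theorem freeGroup_to_surfaceGroup_injective (k : ℕ) (hk : 1 ≤ k) :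
    Function.Injective (FreeGroup.lift (fun i : Fin k => surfaceA k i)) ∧
    Nonempty
      ((FreeGroup.lift (fun i : Fin k => surfaceA k i)).range ≃* FreeGroup (Fin k)) :=
  freeGroup_to_surfaceGroup_injective_general k
end

section
/- For every g ≥ 2, the genus-g surface group Π_g has trivial center. -/
open scoped commutatorElement


/-!
Cutting the genus-`(m + 1)` surface along a separating curve presents `Π_{m+1}` as the
amalgamated product `F_{2m} *_ℤ F_2`, the curve being `(r_m)⁻¹` on one side and `[a, b]` on the
other, where `r_m` is the relator of `Π_m`.

In an amalgamated product none of whose factors is a union of two cosets of the amalgamated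
subgroup, a central element `z` lies in the amalgamated subgroup. Otherwise the reduced form `w`
of `z` conjugates a letter `t` of some factor into a letter `s` of the same factor, and
`w t w⁻¹ s⁻¹` (after absorbing `s` into the first letter of `w` when `w` begins and ends in
different factors) is a nonempty reduced word with trivial product. Here the amalgamated subgroup
is killed by the exponent sum to `ℤ`, so the coset condition holds. Finally, a central power
`[a, b]ⁿ` of `F_2` commutes with `a`; mapping `a` to a reflection and `b` to the unit rotation of
the infinite dihedral group sends `[a, b]` to a nontrivial rotation, which forces `n = 0`.
-/

open Function Monoid

theorem Subgroup.IsComplement.eq_one_of_mem_of_mem {G : Type*} [Group G] {S T : Set G}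
    (h : Subgroup.IsComplement S T) (h1S : 1 ∈ S) (h1T : 1 ∈ T) {g : G} (hS : g ∈ S)
    (hT : g ∈ T) : g = 1 :=
  congrArg (fun x : S × T => (x.1 : G))
    (h.1 (a₁ := (⟨g, hS⟩, ⟨1, h1T⟩)) (a₂ := (⟨1, h1S⟩, ⟨g, hT⟩)) (by simp))

theorem Subgroup.exists_notMem_and_mul_notMem {G : Type*} [Group G] {K : Subgroup G}
    (f : G →* Multiplicative ℤ) (hf : Surjective f) (hK : K ≤ f.ker) (x : G) :
    ∃ t ∉ K, t * x ∉ K := by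
  obtain ⟨t, ht⟩ := hf (Multiplicative.ofAdd (|(f x).toAdd| + 1))
  have := abs_nonneg (f x).toAdd
  have := neg_abs_le (f x).toAdd
  refine ⟨t, fun h => ?_, fun h => ?_⟩
  · have := congrArg Multiplicative.toAdd ((hK h).symm.trans ht)
    simp only [toAdd_one, toAdd_ofAdd] at this
    linarith
  · have := congrArg Multiplicative.toAdd (hK h)
    simp only [map_mul, ht, toAdd_mul, toAdd_ofAdd, toAdd_one] at this
    linarith

theorem zpowersHom_injective {G : Type*} [Group G] {x : G} (hx : ¬ IsOfFinOrder x) :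
    Injective (zpowersHom G x) :=
  (injective_zpow_iff_not_isOfFinOrder.2 hx).comp Multiplicative.toAdd.injective

theorem FreeGroup.exists_notMem_zpowers_and_mul_notMem {α : Type*} [Nonempty α]
    {w : FreeGroup α} (hw : FreeGroup.lift (fun _ => Multiplicative.ofAdd (1 : ℤ)) w = 1)
    (x : FreeGroup α) : ∃ t ∉ Subgroup.zpowers w, t * x ∉ Subgroup.zpowers w := by
  refine Subgroup.exists_notMem_and_mul_notMem (FreeGroup.lift fun _ => Multiplicative.ofAdd 1)
    (fun n => ?_) ?_ x
  · obtain ⟨a⟩ := ‹Nonempty α›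
    exact ⟨FreeGroup.of a ^ n.toAdd, by simp [← ofAdd_zsmul]⟩
  · rintro _ ⟨n, rfl⟩
    simp [hw]

namespace Monoid.PushoutI

variable {ι : Type*} {G : ι → Type*} [∀ i, Group (G i)] {H : Type*} [Group H]
  {φ : ∀ i, H →* G i}

theorem reduced_singleton_iff {i : ι} {x : G i} (hx : x ≠ 1) :
    Reduced φ (CoprodI.NeWord.singleton x hx).toWord ↔ x ∉ (φ i).range := by
  simp [Reduced, CoprodI.NeWord.toWord]

theorem reduced_append_iff {i j k l : ι} {w₁ : CoprodI.NeWord G i j} {hne : j ≠ k}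
    {w₂ : CoprodI.NeWord G k l} :
    Reduced φ (w₁.append hne w₂).toWord ↔
      Reduced φ w₁.toWord ∧ Reduced φ w₂.toWord := by
  simp only [Reduced, CoprodI.NeWord.toWord, CoprodI.NeWord.toList, List.mem_append]
  grind

theorem Reduced.neWord_inv {i j : ι} {w : CoprodI.NeWord G i j} (hw : Reduced φ w.toWord) :
    Reduced φ w.inv.toWord := by
  induction w with
  | singleton x hx =>
    rw [reduced_singleton_iff] at hw
    simpa [CoprodI.NeWord.inv, reduced_singleton_iff] using hw
  | append w₁ hne w₂ ih₁ ih₂ =>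
    rw [reduced_append_iff] at hw
    exact reduced_append_iff.2 ⟨ih₂ hw.2, ih₁ hw.1⟩

theorem Reduced.neWord_replaceHead {i j : ι} {w : CoprodI.NeWord G i j}
    (hw : Reduced φ w.toWord) {x : G i} (hx1 : x ≠ 1) (hx : x ∉ (φ i).range) :
    Reduced φ (w.replaceHead x hx1).toWord := by
  induction w with
  | singleton => exact (reduced_singleton_iff hx1).2 hx
  | append w₁ hne w₂ ih₁ _ =>
    rw [reduced_append_iff] at hw
    exact reduced_append_iff.2 ⟨ih₁ hw.1 hx1 hx, hw.2⟩

theorem ofCoprodI_neWord_prod_notMem_range (hφ : ∀ i, Injective (φ i)) {i j : ι}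
    {w : CoprodI.NeWord G i j} (hw : Reduced φ w.toWord) :
    ofCoprodI w.prod ∉ (base φ).range := fun h =>
  w.toList_ne_nil (congrArg CoprodI.Word.toList (hw.eq_empty_of_mem_range hφ h))

theorem exists_eq_base_mul_reduced_neWord (hφ : ∀ i, Injective (φ i)) {z : PushoutI φ}
    (hz : z ∉ (base φ).range) :
    ∃ (h : H) (i j : ι) (w : CoprodI.NeWord G i j),
      Reduced φ w.toWord ∧ z = base φ h * ofCoprodI w.prod := by
  classical
  obtain ⟨d⟩ := NormalWord.transversal_nonempty φ hφ
  set w : NormalWord d := NormalWord.equiv z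
  have hz_eq : z = base φ w.head * ofCoprodI w.toWord.prod :=
    (NormalWord.equiv.symm_apply_apply z).symm
  have hw : Reduced φ w.toWord := fun ⟨i, g⟩ hg hgφ =>
    w.ne_one _ hg ((d.compl i).eq_one_of_mem_of_mem (Subgroup.one_mem _) (d.one_mem i) hgφ
      (w.normalized i g hg))
  have hw_ne : w.toWord ≠ .empty := by
    rintro hempty
    exact hz ⟨w.head, by rw [hz_eq, hempty]; simp⟩
  obtain ⟨i, j, w', hw'⟩ := CoprodI.NeWord.of_word w.toWord hw_ne
  exact ⟨w.head, i, j, w', hw' ▸ hw, by rw [hz_eq, ← hw']; rfl⟩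

theorem ofCoprodI_neWord_conj_of_ne_of_of_ne (hφ : ∀ i, Injective (φ i)) {i k : ι}
    {w : CoprodI.NeWord G i i} (hw : Reduced φ w.toWord) (hki : k ≠ i) {s t : G k}
    (hs : s ∉ (φ k).range) (ht : t ∉ (φ k).range) :
    ofCoprodI (φ := φ) w.prod * of k t * (ofCoprodI w.prod)⁻¹ ≠ of k s := by
  intro h
  have ht1 : t ≠ 1 := fun h1 => ht (h1 ▸ one_mem _)
  have hs1 : s⁻¹ ≠ 1 := fun h1 => hs (inv_eq_one.1 h1 ▸ one_mem _)
  let v := ((w.append hki.symm (.singleton t ht1)).append hki w.inv).append hki.symm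
    (.singleton s⁻¹ hs1)
  have hv : Reduced φ v.toWord := by
    simp only [v, reduced_append_iff, reduced_singleton_iff, inv_mem_iff]
    exact ⟨⟨⟨hw, ht⟩, hw.neWord_inv⟩, hs⟩
  refine ofCoprodI_neWord_prod_notMem_range hφ hv ⟨1, ?_⟩
  simp [v, h]

theorem ofCoprodI_neWord_conj_of_ne_of_of_fst_ne_last (hφ : ∀ i, Injective (φ i)) {i j : ι}
    {w : CoprodI.NeWord G i j} (hw : Reduced φ w.toWord) (hij : i ≠ j) {s t : G i}
    (hsw : s * w.head ∉ (φ i).range) (ht : t ∉ (φ i).range) :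
    ofCoprodI (φ := φ) w.prod * of i t * (ofCoprodI w.prod)⁻¹ ≠ of i s := by
  intro h
  have ht1 : t⁻¹ ≠ 1 := fun h1 => ht (inv_eq_one.1 h1 ▸ one_mem _)
  have hsw1 : s * w.head ≠ 1 := fun h1 => hsw (h1 ▸ one_mem _)
  let v := ((w.mulHead s hsw1).append hij.symm (.singleton t⁻¹ ht1)).append hij w.inv
  have hv : Reduced φ v.toWord := by
    simp only [v, reduced_append_iff, reduced_singleton_iff, inv_mem_iff]
    exact ⟨⟨hw.neWord_replaceHead hsw1 hsw, ht⟩, hw.neWord_inv⟩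
  refine ofCoprodI_neWord_prod_notMem_range hφ hv ⟨1, ?_⟩
  simp only [v, CoprodI.NeWord.append_prod, CoprodI.NeWord.mulHead_prod,
    CoprodI.NeWord.prod_singleton, CoprodI.NeWord.inv_prod, map_mul, map_inv, ofCoprodI_of, map_one]
  rw [← h]
  group

theorem center_le_range_base (hφ : ∀ i, Injective (φ i)) (hne : ∀ i : ι, ∃ j, j ≠ i)
    (havoid : ∀ i (x : G i), ∃ t ∉ (φ i).range, t * x ∉ (φ i).range) :
    Subgroup.center (PushoutI φ) ≤ (base φ).range := by
  intro z hz
  by_contra hzb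
  obtain ⟨h, i, j, w, hw, rfl⟩ := exists_eq_base_mul_reduced_neWord hφ hzb
  have hconj : ∀ k (s : G k), ofCoprodI (φ := φ) w.prod * of k (φ k h * s * (φ k h)⁻¹) *
      (ofCoprodI w.prod)⁻¹ = of k s := by
    intro k s
    have hcomm := Subgroup.mem_center_iff.1 hz (of k (φ k h * s * (φ k h)⁻¹))
    rw [← of_apply_eq_base φ k h] at hcomm
    simp only [map_mul, map_inv] at hcomm ⊢
    rw [mul_inv_eq_iff_eq_mul]
    simpa only [mul_assoc, inv_mul_cancel_left, mul_right_inj] using hcomm.symm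
  have hconj_notMem : ∀ k (s : G k),
      s ∉ (φ k).range → φ k h * s * (φ k h)⁻¹ ∉ (φ k).range :=
    fun k s hs hmem => hs (by simpa [Subgroup.mul_mem_cancel_left, Subgroup.mul_mem_cancel_right]
      using hmem)
  rcases eq_or_ne i j with rfl | hij
  · obtain ⟨k, hki⟩ := hne i
    obtain ⟨s, hs, -⟩ := havoid k 1
    exact ofCoprodI_neWord_conj_of_ne_of_of_ne hφ hw hki hs (hconj_notMem k s hs) (hconj k s)
  · obtain ⟨s, hs, hsw⟩ := havoid i w.head
    exact ofCoprodI_neWord_conj_of_ne_of_of_fst_ne_last hφ hw hij hsw (hconj_notMem i s hs)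
      (hconj i s)

end Monoid.PushoutI

theorem map_surfaceRelator_eq_one {A : Type*} [CommGroup A] {g : ℕ}
    (f : FreeGroup (Fin (2 * g)) →* A) : f (surfaceRelator g) = 1 := by
  simp [surfaceRelator, map_list_prod, List.map_ofFn, Function.comp_def,
    commutatorElement_def, mul_inv_cancel_comm]

open DihedralGroup in
def surfaceDihedralRep (g : ℕ) : FreeGroup (Fin (2 * g)) →* DihedralGroup 0 :=
  FreeGroup.lift fun i => if Even i.val then sr 0 else r 1

open DihedralGroup in
theorem surfaceDihedralRep_surfaceRelator (g : ℕ) :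
    surfaceDihedralRep g (surfaceRelator g) = r (-2 * (g : ZMod 0)) := by
  simp [surfaceDihedralRep, surfaceRelator, map_list_prod, List.map_ofFn, Function.comp_def,
    commutatorElement_def, r_pow, ← neg_add, one_add_one_eq_two]

theorem eq_zero_of_commute_surfaceRelator_zpow {g : ℕ} (hg : g ≠ 0) {n : ℤ}
    (h : Commute (surfaceRelator g ^ n) (FreeGroup.of ⟨0, by omega⟩)) : n = 0 := by
  have hr := h.map (surfaceDihedralRep g)
  rw [map_zpow, surfaceDihedralRep_surfaceRelator, DihedralGroup.r_zpow] at hr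
  simp only [surfaceDihedralRep, FreeGroup.lift_apply_of, Nat.even_iff, Nat.zero_mod, if_true] at hr
  have h2 : (2 * g * n : ℤ) = -(2 * g * n) := Int.cast_injective (α := ZMod 0) (by
    push_cast
    simpa [Commute, SemiconjBy, DihedralGroup.r_mul_sr, DihedralGroup.sr_mul_r] using hr)
  have : (g : ℤ) * n = 0 := by linarith
  simpa [hg] using this

theorem not_isOfFinOrder_surfaceRelator {g : ℕ} (hg : g ≠ 0) :
    ¬ IsOfFinOrder (surfaceRelator g) := by
  rw [isOfFinOrder_iff_zpow_eq_one]
  rintro ⟨n, hn, h⟩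
  exact hn (eq_zero_of_commute_surfaceRelator_zpow hg (h ▸ Commute.one_left _))

theorem surfaceRelator_succ (m : ℕ) :
    surfaceRelator (m + 1) = FreeGroup.map (Fin.castAdd 2) (surfaceRelator m) *
      FreeGroup.map (Fin.natAdd (2 * m)) (surfaceRelator 1) := by
  simp only [surfaceRelator, List.ofFn_succ', List.prod_concat, map_list_prod, List.map_ofFn,
    Function.comp_def, map_commutatorElement, FreeGroup.map.of, List.ofFn_zero, List.prod_nil]
  rfl

namespace SurfaceGroup

section Decomposition

variable (m : ℕ)

/-- `false` indexes the first `m` handles of the genus-`(m + 1)` surface, `true` the last one. -/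
abbrev handleGenus (b : Bool) : ℕ := cond b 1 m

def handleEmbedding : (b : Bool) → Fin (2 * handleGenus m b) → Fin (2 * (m + 1))
  | false => Fin.castAdd 2
  | true => Fin.natAdd (2 * m)

def boundaryHom : (b : Bool) → Multiplicative ℤ →* FreeGroup (Fin (2 * handleGenus m b))
  | false => zpowersHom _ (surfaceRelator m)⁻¹
  | true => zpowersHom _ (surfaceRelator 1)

def toPushoutGen (k : Fin (2 * m + 2)) : PushoutI (boundaryHom m) :=
  Fin.addCases (fun i => PushoutI.of false (FreeGroup.of i))
    (fun i => PushoutI.of true (FreeGroup.of i)) k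

theorem lift_toPushoutGen_map_handleEmbedding (b : Bool) :
    (FreeGroup.lift (toPushoutGen m)).comp (FreeGroup.map (handleEmbedding m b)) =
      PushoutI.of (φ := boundaryHom m) b := by
  ext i
  cases b <;> simp [handleEmbedding, toPushoutGen, FreeGroup.map.of]

def toPushout : SurfaceGroup (m + 1) →* PushoutI (boundaryHom m) :=
  PresentedGroup.toGroup (f := toPushoutGen m) (by
    rintro r rfl
    have h₀ := PushoutI.of_apply_eq_base (boundaryHom m) false (Multiplicative.ofAdd 1)
    have h₁ := PushoutI.of_apply_eq_base (boundaryHom m) true (Multiplicative.ofAdd 1)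
    simp only [boundaryHom, zpowersHom_apply, toAdd_ofAdd, zpow_one] at h₀ h₁
    rw [surfaceRelator_succ, map_mul]
    change (FreeGroup.lift (toPushoutGen m)).comp (FreeGroup.map (handleEmbedding m false))
        (surfaceRelator m) * (FreeGroup.lift (toPushoutGen m)).comp
        (FreeGroup.map (handleEmbedding m true)) (surfaceRelator 1) = 1
    rw [lift_toPushoutGen_map_handleEmbedding, lift_toPushoutGen_map_handleEmbedding,
      ← inv_inv (PushoutI.of (φ := boundaryHom m) false (surfaceRelator m)), ← map_inv, h₀, h₁,
      inv_mul_cancel])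

def ofPushout : PushoutI (boundaryHom m) →* SurfaceGroup (m + 1) :=
  PushoutI.lift (fun b => (PresentedGroup.mk _).comp (FreeGroup.map (handleEmbedding m b)))
    (zpowersHom _ (PresentedGroup.mk _ (FreeGroup.map (Fin.natAdd (2 * m)) (surfaceRelator 1))))
    (by
      intro b
      ext
      have h : PresentedGroup.mk {surfaceRelator (m + 1)}
          (FreeGroup.map (Fin.castAdd 2) (surfaceRelator m)) *
          PresentedGroup.mk _ (FreeGroup.map (Fin.natAdd (2 * m)) (surfaceRelator 1)) = 1 := by
        rw [← map_mul, ← surfaceRelator_succ]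
        exact PresentedGroup.one_of_mem rfl
      cases b
      · simpa [boundaryHom, handleEmbedding] using inv_eq_of_mul_eq_one_right h
      · simp [boundaryHom, handleEmbedding])

theorem ofPushout_comp_toPushout : (ofPushout m).comp (toPushout m) = MonoidHom.id _ := by
  refine PresentedGroup.ext fun k => ?_
  refine Fin.addCases (fun i => ?_) (fun i => ?_) k
  · change ofPushout m (toPushout m (PresentedGroup.of (Fin.castAdd 2 i))) = _
    simp [toPushout, ofPushout, toPushoutGen, handleEmbedding, ← PresentedGroup.of.eq_1]
  · change ofPushout m (toPushout m (PresentedGroup.of (Fin.natAdd (2 * m) i))) = _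
    simp [toPushout, ofPushout, toPushoutGen, handleEmbedding, ← PresentedGroup.of.eq_1]

theorem toPushout_comp_ofPushout : (toPushout m).comp (ofPushout m) = MonoidHom.id _ := by
  ext b i
  cases b <;> simp [toPushout, ofPushout, handleEmbedding, toPushoutGen, ← PresentedGroup.of.eq_1]

def equivPushout : SurfaceGroup (m + 1) ≃* PushoutI (boundaryHom m) :=
  MonoidHom.toMulEquiv _ _ (ofPushout_comp_toPushout m) (toPushout_comp_ofPushout m)

end Decomposition

theorem center_pushoutI_eq_bot {m : ℕ} (hm : m ≠ 0) :
    Subgroup.center (PushoutI (boundaryHom m)) = ⊥ := by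
  have hφ : ∀ b, Injective (boundaryHom m b)
    | false => zpowersHom_injective (by
        rw [isOfFinOrder_inv_iff]; exact not_isOfFinOrder_surfaceRelator hm)
    | true => zpowersHom_injective (not_isOfFinOrder_surfaceRelator one_ne_zero)
  have havoid : ∀ b (x : FreeGroup (Fin (2 * handleGenus m b))),
      ∃ t ∉ (boundaryHom m b).range, t * x ∉ (boundaryHom m b).range
    | false, x =>
      have : Nonempty (Fin (2 * m)) := ⟨⟨0, by omega⟩⟩
      FreeGroup.exists_notMem_zpowers_and_mul_notMem (w := (surfaceRelator m)⁻¹)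
        (by rw [map_inv, map_surfaceRelator_eq_one, inv_one]) x
    | true, x =>
      FreeGroup.exists_notMem_zpowers_and_mul_notMem (α := Fin (2 * 1))
        (map_surfaceRelator_eq_one _) x
  refine eq_bot_iff.2 fun z hz => ?_
  obtain ⟨n, rfl⟩ := PushoutI.center_le_range_base hφ (fun b => ⟨!b, by simp⟩) havoid hz
  have hcomm : Commute (surfaceRelator 1 ^ n.toAdd) (FreeGroup.of ⟨0, by omega⟩) := by
    refine Commute.of_map (PushoutI.of_injective hφ true) ?_
    have := Subgroup.mem_center_iff.1 hz
      (PushoutI.of true (FreeGroup.of (⟨0, by omega⟩ : Fin (2 * 1))))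
    rw [← PushoutI.of_apply_eq_base _ true] at this
    exact this.symm
  obtain rfl : n = 1 := eq_zero_of_commute_surfaceRelator_zpow one_ne_zero hcomm
  rw [map_one]
  exact one_mem _

end SurfaceGroup

/-- For every `g ≥ 2`, the genus-`g` surface group has trivial center. -/
theorem surfaceGroup_center_trivial (g : ℕ) (hg : 2 ≤ g) :
    Subgroup.center (SurfaceGroup g) = ⊥ := by
  obtain ⟨m, rfl⟩ : ∃ m, g = m + 1 := ⟨g - 1, by omega⟩
  refine eq_bot_iff.2 fun z hz => ?_
  have hz' : SurfaceGroup.equivPushout m z ∈ Subgroup.center _ :=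
    (Subgroup.centerCongr (SurfaceGroup.equivPushout m) ⟨z, hz⟩).2
  rw [SurfaceGroup.center_pushoutI_eq_bot (by omega), Subgroup.mem_bot,
    MulEquiv.map_eq_one_iff] at hz'
  exact hz'
end

section
/- For every g ≥ 2 and every natural number k, the genus-g surface group Π_g is not isomorphic to the free group F_k: there is no group isomorphism Π_g ≃* F_k. -/
open scoped commutatorElement

/-!
Homomorphisms `Π_g → G` correspond to tuples `(a₁, b₁, …, a_g, b_g)` in `G` with
`∏ [aᵢ, bᵢ] = 1`, and homomorphisms `F_k → G` to arbitrary `k`-tuples. Take `G = D₄` of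
order 8: each of its commutators is `1` or the central involution `r²`, and 40 of its 64 pairs
commute. Splitting off one pair at a time, the number `N` of homomorphisms `Π_g → D₄` satisfies
`2N = 64^g + 16^g = 16^g (4^g + 1)`, which for `g ≥ 1` has the odd factor `4^g + 1 > 1` and so
is not `2 · 8^k`.
-/

namespace PresentedGroup

variable {α G : Type*} [Group G]

def homEquiv (rels : Set (FreeGroup α)) :
    (PresentedGroup rels →* G) ≃ {f : α → G // ∀ r ∈ rels, FreeGroup.lift f r = 1} where
  toFun φ := ⟨φ ∘ of, fun r hr => by
    have hlift : FreeGroup.lift (φ ∘ of) = φ.comp (mk rels) := by ext; simp [of]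
    rw [hlift, MonoidHom.comp_apply, one_of_mem hr, map_one]⟩
  invFun f := toGroup f.2
  left_inv φ := ext fun _ => toGroup.of _
  right_inv f := Subtype.ext <| funext fun _ => toGroup.of _

end PresentedGroup

section CommProd

variable {G : Type*} [Group G]

def commProd {g : ℕ} (v : Fin g → G × G) : G :=
  (List.ofFn fun i => ⁅(v i).1, (v i).2⁆).prod

lemma commProd_cons {g : ℕ} (p : G × G) (v : Fin g → G × G) :
    commProd (Fin.cons p v : Fin (g + 1) → G × G) = ⁅p.1, p.2⁆ * commProd v := by
  simp [commProd, List.ofFn_succ]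

variable (G) [Fintype G] [DecidableEq G]

def commProdCount (g : ℕ) (w : G) : ℕ :=
  Fintype.card {v : Fin g → G × G // commProd v = w}

variable {G}

lemma commProdCount_zero (w : G) : commProdCount G 0 w = if w = 1 then 1 else 0 := by
  split_ifs with hw <;> simp [commProdCount, commProd, Fintype.card_subtype, eq_comm, hw]

lemma commProdCount_succ (g : ℕ) (w : G) :
    commProdCount G (g + 1) w = ∑ p : G × G, commProdCount G g (⁅p.1, p.2⁆⁻¹ * w) := by
  simp only [commProdCount, Fintype.card_subtype, Finset.card_filter]
  rw [← (Fin.consEquiv fun _ => G × G).sum_comp, Fintype.sum_prod_type]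
  simp only [Fin.consEquiv, Equiv.coe_fn_mk, commProd_cons, eq_inv_mul_iff_mul_eq]

end CommProd

def Fin.pairArrowEquiv (α : Type*) (g : ℕ) : (Fin (2 * g) → α) ≃ (Fin g → α × α) :=
  ((finProdFinEquiv.trans (finCongr (Nat.mul_comm g 2))).arrowCongr (Equiv.refl α)).symm.trans <|
    (Equiv.curry _ _ _).trans <| Equiv.arrowCongr (Equiv.refl _) (finTwoArrowEquiv α)

lemma Fin.pairArrowEquiv_apply {α : Type*} {g : ℕ} (f : Fin (2 * g) → α) (i : Fin g) :
    Fin.pairArrowEquiv α g f i = (f ⟨2 * i, by omega⟩, f ⟨2 * i + 1, by omega⟩) := by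
  simp [Fin.pairArrowEquiv, finProdFinEquiv, Equiv.arrowCongr, Nat.add_comm 1]

lemma FreeGroup.lift_surfaceRelator {G : Type*} [Group G] {g : ℕ} (f : Fin (2 * g) → G) :
    FreeGroup.lift f (surfaceRelator g) = commProd (Fin.pairArrowEquiv G g f) := by
  rw [surfaceRelator, map_list_prod, List.map_ofFn]
  simp [commProd, Function.comp_def, Fin.pairArrowEquiv_apply, commutatorElement_def]

def SurfaceGroup.homEquiv (g : ℕ) (G : Type*) [Group G] :
    (SurfaceGroup g →* G) ≃ {v : Fin g → G × G // commProd v = 1} :=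
  (PresentedGroup.homEquiv _).trans <| (Fin.pairArrowEquiv G g).subtypeEquiv fun f => by
    simp [FreeGroup.lift_surfaceRelator]

lemma FreeGroup.card_monoidHom (α G : Type*) [Group G] [Finite α] :
    Nat.card (FreeGroup α →* G) = Nat.card G ^ Nat.card α := by
  rw [← Nat.card_fun, Nat.card_congr FreeGroup.lift]

namespace DihedralGroup

lemma commutatorElement_eq_one_or_eq_r_two (a b : DihedralGroup 4) :
    ⁅a, b⁆ = 1 ∨ ⁅a, b⁆ = r 2 := by
  revert a b; decide

lemma card_commuting_pairs :
    (Finset.univ.filter fun p : DihedralGroup 4 × DihedralGroup 4 => ⁅p.1, p.2⁆ = 1).card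
      = 40 := by
  decide

lemma card_noncommuting_pairs :
    (Finset.univ.filter fun p : DihedralGroup 4 × DihedralGroup 4 => ¬⁅p.1, p.2⁆ = 1).card
      = 24 := by
  decide

local notation "N" => commProdCount (DihedralGroup 4)

lemma commProdCount_succ (g : ℕ) (w : DihedralGroup 4) :
    N (g + 1) w = 40 * N g w + 24 * N g (r 2 * w) := by
  have hterm (p : DihedralGroup 4 × DihedralGroup 4) :
      N g (⁅p.1, p.2⁆⁻¹ * w) = if ⁅p.1, p.2⁆ = 1 then N g w else N g (r 2 * w) := by
    rcases commutatorElement_eq_one_or_eq_r_two p.1 p.2 with h | h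
    · simp [h]
    · rw [h, if_neg (by decide), show (r 2 : DihedralGroup 4)⁻¹ = r 2 by decide]
  rw [_root_.commProdCount_succ, Finset.sum_congr rfl fun p _ => hterm p, Finset.sum_ite,
    Finset.sum_const, Finset.sum_const, card_commuting_pairs, card_noncommuting_pairs,
    smul_eq_mul, smul_eq_mul]

lemma commProdCount_one_add_r_two (g : ℕ) : N g 1 + N g (r 2) = 64 ^ g := by
  induction g with
  | zero => simp [commProdCount_zero]; decide
  | succ g ih =>
    rw [commProdCount_succ g 1, commProdCount_succ g (r 2), mul_one,
      show (r 2 * r 2 : DihedralGroup 4) = 1 by decide, pow_succ, ← ih]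
    ring

lemma commProdCount_one_eq_r_two_add (g : ℕ) : N g 1 = N g (r 2) + 16 ^ g := by
  induction g with
  | zero => simp [commProdCount_zero]; decide
  | succ g ih =>
    rw [commProdCount_succ g 1, commProdCount_succ g (r 2), mul_one,
      show (r 2 * r 2 : DihedralGroup 4) = 1 by decide, pow_succ, ih]
    ring

lemma two_mul_card_monoidHom_surfaceGroup (g : ℕ) :
    2 * Nat.card (SurfaceGroup g →* DihedralGroup 4) = 64 ^ g + 16 ^ g := by
  rw [Nat.card_congr (SurfaceGroup.homEquiv g _), Nat.card_eq_fintype_card]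
  have hsum := commProdCount_one_add_r_two g
  have hdiff := commProdCount_one_eq_r_two_add g
  unfold commProdCount at hsum hdiff
  omega

end DihedralGroup

lemma two_mul_eight_pow_ne (k : ℕ) {g : ℕ} (hg : g ≠ 0) : 2 * 8 ^ k ≠ 64 ^ g + 16 ^ g := by
  intro h
  have hodd : Odd (4 ^ g + 1) := (Nat.even_pow.mpr ⟨by decide, hg⟩).add_one
  have hdvd : 4 ^ g + 1 ∣ 2 ^ (3 * k + 1) := ⟨16 ^ g, by
    rw [pow_succ, pow_mul, mul_comm, show 2 ^ 3 = 8 by rfl, h, add_mul, one_mul, ← mul_pow]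
    norm_num⟩
  have hone : 4 ^ g + 1 = 1 := (hodd.coprime_two_right.pow_right _).eq_one_of_dvd hdvd
  have hpos : 0 < 4 ^ g := by positivity
  omega

/-- For every `g ≥ 2` and every `k`, the genus-`g` surface group is not
isomorphic to the free group of rank `k`. -/
theorem surfaceGroup_not_iso_freeGroup (g : ℕ) (hg : 2 ≤ g) (k : ℕ) :
    ¬ Nonempty (SurfaceGroup g ≃* FreeGroup (Fin k)) := by
  rintro ⟨e⟩
  have hcount := DihedralGroup.two_mul_card_monoidHom_surfaceGroup g
  rw [Nat.card_congr e.monoidHomCongrLeftEquiv, FreeGroup.card_monoidHom, Nat.card_fin,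
    DihedralGroup.nat_card] at hcount
  exact two_mul_eight_pow_ne k (by omega) hcount
end
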